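/- arXiv:2508.12757 — 2 statements merged into one kernel-verified Lean document; each statement's English description precedes it below -/
import Mathlib

section
/- Kernel of left multiplication by a zero divisor: let A be a composition algebra over a field K of characteristic ≠ 2, with quadratic form Q, bilinear form B(x,y) = (Q(x+y) − Q x − Q y)/2 and conjugation x̄ := (2·B(x,1)) • 1 − x. Let x ∈ A be nonzero with Q(x) = 0. Then: (i) {y ∈ A | x*y = 0} = {x̄*z | z ∈ A}; in particular whenever x*y = 0 there exists z ∈ A with y = x̄*z; (ii) Q(x̄*z) = 0 for all z ∈ A, so {y | x*y = 0} is an isotropic subspace; (iii) the K-subspace {y ∈ A | x*y = 0} has dimension equal to (Module.finrank K A)/2, hence it is maximal isotropic. -/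
/-!
Linearizing `Q (x * y) = Q x * Q y` gives the adjoint relation `B (x̄ * a, b) = B (x * b, a)`,
and with nondegeneracy the identity `x * (x̄ * z) = Q x • z`. The first says that the kernel of
left multiplication by `x` is the orthogonal of `x̄ * A`; the second, for `Q x = 0`, that `x̄ * A`
lies in that kernel. If `x * y = 0` and `Q y ≠ 0`, then `B (x, z) * Q y = B (x * y, z * y) = 0`
for all `z` forces `x = 0`; so the kernel is totally isotropic. Hence `W = x̄ * A` satisfies
`W ⊆ W^⊥ ⊆ W^⊥⊥ = W`, i.e. `W = W^⊥` is Lagrangian, of dimension `dim A / 2`.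
-/

noncomputable section

/-- The conjugation of a composition algebra with quadratic form `Q` and associated
bilinear form `B x y = (Q (x + y) - Q x - Q y) / 2`:  `x̄ = (2 • B x 1) • 1 - x`. -/
def conjCA {K : Type*} [Field K] {A : Type*} [NonAssocRing A] [Module K A]
    (Q : QuadraticForm K A) (x : A) : A :=
  (2 * ((Q (x + 1) - Q x - Q 1) / 2)) • (1 : A) - x

open QuadraticMap Module
open LinearMap (BilinForm)

namespace LinearMap.BilinForm

variable {K M : Type*} [Field K] [AddCommGroup M] [Module K M] [FiniteDimensional K M]
  {B : LinearMap.BilinForm K M} {W : Submodule K M}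

theorem orthogonal_eq_self_of_le_orthogonal (hB : B.Nondegenerate) (hrefl : B.IsRefl)
    (hW : W ≤ B.orthogonal W) (hW' : B.orthogonal W ≤ B.orthogonal (B.orthogonal W)) :
    B.orthogonal W = W :=
  le_antisymm (by rwa [orthogonal_orthogonal hB hrefl] at hW') hW

theorem finrank_eq_half_of_orthogonal_eq_self (hB : B.Nondegenerate) (hW : B.orthogonal W = W) :
    finrank K W = finrank K M / 2 := by
  have h := finrank_orthogonal hB W
  rw [hW] at h
  have := Submodule.finrank_le W
  omega

end LinearMap.BilinForm

namespace CompositionAlgebra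

variable {K A : Type*} [Field K] [NonAssocRing A] [Module K A] {Q : QuadraticForm K A}

theorem isRefl_polarBilin : Q.polarBilin.IsRefl := fun a b h => by
  rwa [polarBilin_apply_apply, polar_comm] at h

theorem le_orthogonal_of_forall_map_eq_zero {V : Submodule K A} (hV : ∀ v ∈ V, Q v = 0) :
    V ≤ BilinForm.orthogonal Q.polarBilin V := fun v hv =>
  BilinForm.mem_orthogonal_iff.mpr fun w hw => by
    simp [polar, hV v hv, hV w hw, hV _ (V.add_mem hw hv)]

theorem polar_mul_mul_right (hmul : ∀ x y : A, Q (x * y) = Q x * Q y) (u z y : A) :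
    polar Q (u * y) (z * y) = polar Q u z * Q y := by
  simp only [polar, ← add_mul, hmul]
  ring

theorem polar_mul_mul_left (hmul : ∀ x y : A, Q (x * y) = Q x * Q y) (u y w : A) :
    polar Q (u * y) (u * w) = Q u * polar Q y w := by
  simp only [polar, ← mul_add, hmul]
  ring

theorem polar_mul_add_polar_mul (hmul : ∀ x y : A, Q (x * y) = Q x * Q y) (u y z w : A) :
    polar Q (u * y) (z * w) + polar Q (u * w) (z * y) = polar Q u z * polar Q y w := by
  have h := polar_mul_mul_right hmul u z (y + w)
  simp only [mul_add, polar_add_left, polar_add_right, polar_mul_mul_right hmul] at h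
  have hQ : Q (y + w) = Q y + Q w + polar Q y w := by simp only [polar]; ring
  rw [hQ] at h
  linear_combination h

structure IsCompositionForm (Q : QuadraticForm K A) : Prop where
  map_mul : ∀ x y : A, Q (x * y) = Q x * Q y
  separatingLeft : Q.polarBilin.SeparatingLeft

theorem IsCompositionForm.nondegenerate (hQ : IsCompositionForm Q) : Q.polarBilin.Nondegenerate :=
  isRefl_polarBilin.nondegenerate_iff_separatingLeft.mpr hQ.separatingLeft

theorem IsCompositionForm.map_one [Nontrivial A] (hQ : IsCompositionForm Q) : Q 1 = 1 := by
  have hidem : Q 1 * Q 1 = Q 1 := by rw [← hQ.map_mul, one_mul]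
  rcases eq_or_ne (Q 1) 0 with h0 | h0
  · have hQ0 (y : A) : Q y = 0 := by rw [← one_mul y, hQ.map_mul, h0, zero_mul]
    obtain ⟨a, ha⟩ := exists_ne (0 : A)
    exact absurd (hQ.separatingLeft a fun b => by simp [polar, hQ0]) ha
  · exact mul_left_cancel₀ h0 (by rw [hidem, mul_one])

theorem map_eq_zero_of_mul_eq_zero (hQ : IsCompositionForm Q) {x y : A} (hx : x ≠ 0)
    (hxy : x * y = 0) : Q y = 0 := by
  by_contra hy
  refine hx (hQ.separatingLeft x fun z => ?_)
  have h := polar_mul_mul_right hQ.map_mul x z y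
  rw [hxy, polar_zero_left] at h
  exact (mul_eq_zero.mp h.symm).resolve_right hy

theorem ker_mulLeft_le_orthogonal [SMulCommClass K A A] (hQ : IsCompositionForm Q) {x : A}
    (hx : x ≠ 0) :
    LinearMap.ker (LinearMap.mulLeft K x) ≤
      BilinForm.orthogonal Q.polarBilin (LinearMap.ker (LinearMap.mulLeft K x)) :=
  le_orthogonal_of_forall_map_eq_zero fun _ hy => map_eq_zero_of_mul_eq_zero hQ hx hy

theorem conjCA_eq (h2 : (2 : K) ≠ 0) (u : A) : conjCA Q u = polar Q u 1 • (1 : A) - u := by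
  rw [conjCA, mul_div_cancel₀ _ h2]
  rfl

theorem polar_conjCA_one (h2 : (2 : K) ≠ 0) (hQ1 : Q 1 = 1) (u : A) :
    polar Q (conjCA Q u) 1 = polar Q u 1 := by
  rw [conjCA_eq h2, polar_sub_left, polar_smul_left, polar_self, hQ1, smul_eq_mul]
  norm_num
  ring

theorem conjCA_conjCA (h2 : (2 : K) ≠ 0) (hQ1 : Q 1 = 1) (u : A) : conjCA Q (conjCA Q u) = u := by
  rw [conjCA_eq h2 (conjCA Q u), polar_conjCA_one h2 hQ1, conjCA_eq h2]
  abel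

theorem map_conjCA (h2 : (2 : K) ≠ 0) (hQ1 : Q 1 = 1) (u : A) : Q (conjCA Q u) = Q u := by
  have h : Q (polar Q u 1 • (1 : A) + -u) =
      Q (polar Q u 1 • (1 : A)) + Q (-u) + polar Q (polar Q u 1 • (1 : A)) (-u) := by
    simp only [polar]
    ring
  rw [conjCA_eq h2, sub_eq_add_neg, h, QuadraticMap.map_smul, QuadraticMap.map_neg,
    polar_neg_right, polar_smul_left, hQ1, polar_comm Q 1, smul_eq_mul, smul_eq_mul]
  ring

variable [IsScalarTower K A A]

theorem polar_conjCA_mul (h2 : (2 : K) ≠ 0) (hmul : ∀ x y : A, Q (x * y) = Q x * Q y)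
    (u a b : A) : polar Q (conjCA Q u * a) b = polar Q (u * b) a := by
  have h := polar_mul_add_polar_mul hmul u a 1 b
  simp only [one_mul] at h
  rw [conjCA_eq h2, sub_mul, smul_mul_assoc, one_mul, polar_sub_left, polar_smul_left,
    smul_eq_mul]
  linear_combination -h

theorem mul_conjCA_mul [Nontrivial A] (h2 : (2 : K) ≠ 0) (hQ : IsCompositionForm Q) (u z : A) :
    u * (conjCA Q u * z) = Q u • z := by
  refine sub_eq_zero.mp (hQ.separatingLeft _ fun w => ?_)
  have h := polar_conjCA_mul h2 hQ.map_mul (conjCA Q u) (conjCA Q u * z) w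
  rw [conjCA_conjCA h2 hQ.map_one, polar_mul_mul_left hQ.map_mul, map_conjCA h2 hQ.map_one] at h
  rw [polarBilin_apply_apply, polar_sub_left, polar_smul_left, h, polar_comm Q z, smul_eq_mul,
    sub_self]

variable [SMulCommClass K A A]

theorem ker_mulLeft_eq_orthogonal_range (h2 : (2 : K) ≠ 0) (hQ : IsCompositionForm Q) (x : A) :
    LinearMap.ker (LinearMap.mulLeft K x) =
      BilinForm.orthogonal Q.polarBilin (LinearMap.range (LinearMap.mulLeft K (conjCA Q x))) := by
  ext y
  simp only [LinearMap.mem_ker, LinearMap.mulLeft_apply, BilinForm.mem_orthogonal_iff,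
    LinearMap.mem_range, forall_exists_index, forall_apply_eq_imp_iff, polarBilin_apply_apply,
    polar_conjCA_mul h2 hQ.map_mul]
  exact ⟨fun h z => by rw [h, polar_zero_left], fun h => hQ.separatingLeft _ h⟩

theorem range_mulLeft_conjCA_le_ker [Nontrivial A] (h2 : (2 : K) ≠ 0) (hQ : IsCompositionForm Q)
    {x : A} (hQx : Q x = 0) :
    LinearMap.range (LinearMap.mulLeft K (conjCA Q x)) ≤
      LinearMap.ker (LinearMap.mulLeft K x) := by
  rintro _ ⟨z, rfl⟩
  simp [mul_conjCA_mul h2 hQ, hQx]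

end CompositionAlgebra

open CompositionAlgebra

/-- Kernel of left multiplication by a zero divisor `x` in a composition algebra:
it equals `x̄ * A`, it is isotropic, and it has dimension `(dim A) / 2`
(hence is maximal isotropic). -/
theorem ker_leftMul_zero_divisor
    (K : Type*) [Field K] (h2 : (2 : K) ≠ 0)
    (A : Type*) [NonAssocRing A] [Module K A] [IsScalarTower K A A] [SMulCommClass K A A]
    [Nontrivial A] [FiniteDimensional K A]
    (Q : QuadraticForm K A)
    (hmul : ∀ x y : A, Q (x * y) = Q x * Q y)
    (hnd : ∀ x : A, (∀ y : A, (Q (x + y) - Q x - Q y) / 2 = 0) → x = 0)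
    (x : A) (hx : x ≠ 0) (hQx : Q x = 0) :
    (∀ y : A, x * y = 0 ↔ ∃ z : A, y = conjCA Q x * z) ∧
    (∀ z : A, Q (conjCA Q x * z) = 0) ∧
    Set.finrank K {y : A | x * y = 0} = Module.finrank K A / 2 := by
  have hQ : IsCompositionForm Q := ⟨hmul, fun a ha => hnd a fun y => by
    rw [show Q (a + y) - Q a - Q y = 0 from ha y, zero_div]⟩
  set R := LinearMap.range (LinearMap.mulLeft K (conjCA Q x))
  have hker := ker_mulLeft_eq_orthogonal_range h2 hQ x
  have hR : BilinForm.orthogonal Q.polarBilin R = R :=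
    BilinForm.orthogonal_eq_self_of_le_orthogonal hQ.nondegenerate isRefl_polarBilin
      (hker ▸ range_mulLeft_conjCA_le_ker h2 hQ hQx) (hker ▸ ker_mulLeft_le_orthogonal hQ hx)
  have hmem (y : A) : x * y = 0 ↔ y ∈ R := by
    rw [← hR, ← hker]
    rfl
  refine ⟨fun y => (hmem y).trans (by simp [R, eq_comm]), fun z => ?_, ?_⟩
  · rw [hmul, map_conjCA h2 hQ.map_one, hQx, zero_mul]
  · rw [Set.finrank, show {y : A | x * y = 0} = R from Set.ext hmem, Submodule.span_eq]
    exact BilinForm.finrank_eq_half_of_orthogonal_eq_self hQ.nondegenerate hR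
end
end

section
/- Cross product from a normed division algebra: let A be a Euclidean Hurwitz algebra and let V = (ℝ ∙ 1)ᗮ ⊆ A be the orthogonal complement of the unit (the imaginary part). For x, y ∈ V define x × y := x*y − ⟪x*y, 1⟫ • 1 (the imaginary part of the product x*y). Then: x × y ∈ V for all x, y ∈ V; the trilinear map (x,y,z) ↦ ⟪x × y, z⟫ on V is alternating (it vanishes whenever two of its arguments coincide); and ‖x × y‖² = ‖x‖²·‖y‖² − ⟪x,y⟫² for all x, y ∈ V. Hence × is a vector cross product on V. -/
/-!
Multiplicativity of the norm polarizes: `⟪x a, x b⟫ = ‖x‖² ⟪a, b⟫`, `⟪a x, b x⟫ = ⟪a, b⟫ ‖x‖²`,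
and, polarizing once more in the left factor, `⟪x a, u b⟫ + ⟪u a, x b⟫ = 2 ⟪x, u⟫ ⟪a, b⟫`.
Specializing these identities at the unit `e` gives, for imaginary `x, y, z`,
`⟪x y, e⟫ = -⟪x, y⟫`, `⟪x y, x⟫ = ⟪x y, y⟫ = 0` and `⟪x x, z⟫ = 0`. Since `‖e‖ = 1`,
`w ↦ w - ⟪w, e⟫ e` is the orthogonal projection onto `(ℝ ∙ e)ᗮ`, so
`‖x × y‖² = ‖x y‖² - ⟪x y, e⟫² = ‖x‖² ‖y‖² - ⟪x, y⟫²`.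
-/

noncomputable section

open RealInnerProductSpace

section Projection

variable {E : Type*} [NormedAddCommGroup E] [InnerProductSpace ℝ E]

theorem sub_inner_smul_mem_orthogonal_span {e : E} (he : ‖e‖ = 1) (w : E) :
    w - ⟪w, e⟫ • e ∈ (Submodule.span ℝ {e})ᗮ := by
  rw [Submodule.mem_orthogonal_singleton_iff_inner_right, inner_sub_right, inner_smul_right,
    real_inner_self_eq_norm_sq, he, real_inner_comm]
  ring

theorem inner_sub_inner_smul_of_inner_eq_zero {e z : E} (hz : ⟪e, z⟫ = 0) (w : E) :
    ⟪w - ⟪w, e⟫ • e, z⟫ = ⟪w, z⟫ := by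
  rw [inner_sub_left, real_inner_smul_left, hz, mul_zero, sub_zero]

theorem norm_sub_inner_smul_sq {e : E} (he : ‖e‖ = 1) (w : E) :
    ‖w - ⟪w, e⟫ • e‖ ^ 2 = ‖w‖ ^ 2 - ⟪w, e⟫ ^ 2 := by
  rw [norm_sub_sq_real, real_inner_smul_right, norm_smul, he, Real.norm_eq_abs, mul_one, sq_abs]
  ring

end Projection

theorem LinearMap.inner_map_map_of_norm_map_eq_mul {E F : Type*} [NormedAddCommGroup E]
    [InnerProductSpace ℝ E] [NormedAddCommGroup F] [InnerProductSpace ℝ F]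
    (f : E →ₗ[ℝ] F) (c : ℝ) (hf : ∀ a, ‖f a‖ = c * ‖a‖) (a b : E) :
    ⟪f a, f b⟫ = c ^ 2 * ⟪a, b⟫ := by
  have hfab := norm_add_sq_real (f a) (f b)
  rw [← map_add, hf, hf, hf] at hfab
  have hab := norm_add_sq_real a b
  linear_combination (c ^ 2 * hab - hfab) / 2

section NormMultiplicative

variable {A : Type*} [NormedAddCommGroup A] [InnerProductSpace ℝ A]

theorem inner_mul_mul_left {mul : A →ₗ[ℝ] A →ₗ[ℝ] A}
    (hnorm : ∀ x y, ‖mul x y‖ = ‖x‖ * ‖y‖) (x a b : A) :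
    ⟪mul x a, mul x b⟫ = ‖x‖ ^ 2 * ⟪a, b⟫ :=
  (mul x).inner_map_map_of_norm_map_eq_mul ‖x‖ (hnorm x) a b

theorem inner_mul_mul_right {mul : A →ₗ[ℝ] A →ₗ[ℝ] A}
    (hnorm : ∀ x y, ‖mul x y‖ = ‖x‖ * ‖y‖) (a b x : A) :
    ⟪mul a x, mul b x⟫ = ⟪a, b⟫ * ‖x‖ ^ 2 := by
  rw [mul_comm]
  exact (mul.flip x).inner_map_map_of_norm_map_eq_mul ‖x‖
    (fun a ↦ by rw [LinearMap.flip_apply, hnorm, mul_comm]) a b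

theorem inner_mul_mul_add_inner_mul_mul {mul : A →ₗ[ℝ] A →ₗ[ℝ] A}
    (hnorm : ∀ x y, ‖mul x y‖ = ‖x‖ * ‖y‖) (x u a b : A) :
    ⟪mul x a, mul u b⟫ + ⟪mul u a, mul x b⟫ = 2 * ⟪x, u⟫ * ⟪a, b⟫ := by
  have hxu := inner_mul_mul_left hnorm (x + u) a b
  rw [map_add, LinearMap.add_apply, LinearMap.add_apply, inner_add_left, inner_add_right,
    inner_add_right, inner_mul_mul_left hnorm, inner_mul_mul_left hnorm, norm_add_sq_real] at hxu
  linarith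

variable {mul : A →ₗ[ℝ] A →ₗ[ℝ] A} {e : A}

theorem norm_eq_one_of_one_mul [Nontrivial A] (h_one_mul : ∀ x, mul e x = x)
    (hnorm : ∀ x y, ‖mul x y‖ = ‖x‖ * ‖y‖) : ‖e‖ = 1 := by
  have he : e ≠ 0 := by
    obtain ⟨x, hx⟩ := exists_ne (0 : A)
    rintro rfl
    exact hx (by simpa using (h_one_mul x).symm)
  have hee := hnorm e e
  rw [h_one_mul] at hee
  exact (mul_eq_left₀ (norm_ne_zero_iff.mpr he)).mp hee.symm

theorem inner_mul_unit (h_one_mul : ∀ x, mul e x = x) (h_mul_one : ∀ x, mul x e = x)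
    (hnorm : ∀ x y, ‖mul x y‖ = ‖x‖ * ‖y‖) (x y : A) :
    ⟪mul x y, e⟫ = 2 * ⟪x, e⟫ * ⟪y, e⟫ - ⟪x, y⟫ := by
  have h := inner_mul_mul_add_inner_mul_mul hnorm x e y e
  rw [h_one_mul, h_one_mul, h_mul_one, real_inner_comm x y] at h
  linarith

theorem inner_mul_left_self (h_mul_one : ∀ x, mul x e = x)
    (hnorm : ∀ x y, ‖mul x y‖ = ‖x‖ * ‖y‖) (x y : A) :
    ⟪mul x y, x⟫ = ‖x‖ ^ 2 * ⟪y, e⟫ := by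
  simpa only [h_mul_one] using inner_mul_mul_left hnorm x y e

theorem inner_mul_right_self (h_one_mul : ∀ x, mul e x = x)
    (hnorm : ∀ x y, ‖mul x y‖ = ‖x‖ * ‖y‖) (x y : A) :
    ⟪mul x y, y⟫ = ⟪x, e⟫ * ‖y‖ ^ 2 := by
  simpa only [h_one_mul] using inner_mul_mul_right hnorm x e y

theorem inner_mul_self (h_one_mul : ∀ x, mul e x = x) (h_mul_one : ∀ x, mul x e = x)
    (hnorm : ∀ x y, ‖mul x y‖ = ‖x‖ * ‖y‖) (x z : A) :
    ⟪mul x x, z⟫ = 2 * ⟪x, z⟫ * ⟪x, e⟫ - ⟪z, e⟫ * ‖x‖ ^ 2 := by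
  have h := inner_mul_mul_add_inner_mul_mul hnorm x z x e
  rw [h_mul_one, h_mul_one, inner_mul_right_self h_one_mul hnorm] at h
  linarith

end NormMultiplicative

theorem cross_product_from_hurwitz_algebra_general
    (A : Type*) [NormedAddCommGroup A] [InnerProductSpace ℝ A]
    [Nontrivial A]
    (mul : A →ₗ[ℝ] A →ₗ[ℝ] A) (e : A)
    (h_one_mul : ∀ x, mul e x = x) (h_mul_one : ∀ x, mul x e = x)
    (hnorm : ∀ x y, ‖mul x y‖ = ‖x‖ * ‖y‖) :
    ∀ x ∈ (Submodule.span ℝ {e})ᗮ, ∀ y ∈ (Submodule.span ℝ {e})ᗮ,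
      (mul x y - ⟪mul x y, e⟫ • e) ∈ (Submodule.span ℝ {e})ᗮ ∧
      (∀ z ∈ (Submodule.span ℝ {e})ᗮ, ⟪mul x x - ⟪mul x x, e⟫ • e, z⟫ = 0) ∧
      ⟪mul x y - ⟪mul x y, e⟫ • e, x⟫ = 0 ∧
      ⟪mul x y - ⟪mul x y, e⟫ • e, y⟫ = 0 ∧
      ‖mul x y - ⟪mul x y, e⟫ • e‖ ^ 2 = ‖x‖ ^ 2 * ‖y‖ ^ 2 - ⟪x, y⟫ ^ 2 := by
  intro x hx y hy
  have he : ‖e‖ = 1 := norm_eq_one_of_one_mul h_one_mul hnorm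
  have hxe := Submodule.mem_orthogonal_singleton_iff_inner_left.mp hx
  have hye := Submodule.mem_orthogonal_singleton_iff_inner_left.mp hy
  have hex := Submodule.mem_orthogonal_singleton_iff_inner_right.mp hx
  have hey := Submodule.mem_orthogonal_singleton_iff_inner_right.mp hy
  refine ⟨sub_inner_smul_mem_orthogonal_span he _, fun z hz ↦ ?_, ?_, ?_, ?_⟩
  · rw [inner_sub_inner_smul_of_inner_eq_zero
        (Submodule.mem_orthogonal_singleton_iff_inner_right.mp hz),
      inner_mul_self h_one_mul h_mul_one hnorm, hxe,
      Submodule.mem_orthogonal_singleton_iff_inner_left.mp hz]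
    ring
  · rw [inner_sub_inner_smul_of_inner_eq_zero hex, inner_mul_left_self h_mul_one hnorm, hye,
      mul_zero]
  · rw [inner_sub_inner_smul_of_inner_eq_zero hey, inner_mul_right_self h_one_mul hnorm, hxe,
      zero_mul]
  · rw [norm_sub_inner_smul_sq he, hnorm, inner_mul_unit h_one_mul h_mul_one hnorm, hxe,
      hye]
    ring

/-- Cross product from a normed division algebra: in a Euclidean Hurwitz algebra — a
finite-dimensional real inner product space `A`, nontrivial, with bilinear unital
multiplication `mul` (unit `e`) whose norm is multiplicative — the imaginary part
`V = (ℝ ∙ e)ᗮ` carries the vector cross product `x × y = Im (mul x y)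
= mul x y - ⟪mul x y, e⟫ • e`:  it takes values in `V`, the form `(x,y,z) ↦ ⟪x × y, z⟫`
is alternating, and `‖x × y‖² = ‖x‖² ‖y‖² - ⟪x, y⟫²`. -/
theorem cross_product_from_hurwitz_algebra
    (A : Type*) [NormedAddCommGroup A] [InnerProductSpace ℝ A]
    [FiniteDimensional ℝ A] [Nontrivial A]
    (mul : A →ₗ[ℝ] A →ₗ[ℝ] A) (e : A)
    (h_one_mul : ∀ x, mul e x = x) (h_mul_one : ∀ x, mul x e = x)
    (hnorm : ∀ x y, ‖mul x y‖ = ‖x‖ * ‖y‖) :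
    ∀ x ∈ (Submodule.span ℝ {e})ᗮ, ∀ y ∈ (Submodule.span ℝ {e})ᗮ,
      (mul x y - ⟪mul x y, e⟫ • e) ∈ (Submodule.span ℝ {e})ᗮ ∧
      (∀ z ∈ (Submodule.span ℝ {e})ᗮ, ⟪mul x x - ⟪mul x x, e⟫ • e, z⟫ = 0) ∧
      ⟪mul x y - ⟪mul x y, e⟫ • e, x⟫ = 0 ∧
      ⟪mul x y - ⟪mul x y, e⟫ • e, y⟫ = 0 ∧
      ‖mul x y - ⟪mul x y, e⟫ • e‖ ^ 2 = ‖x‖ ^ 2 * ‖y‖ ^ 2 - ⟪x, y⟫ ^ 2 :=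
  cross_product_from_hurwitz_algebra_general A mul e h_one_mul h_mul_one hnorm
end
end
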